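/- arXiv:0807.3102 — 3 statements merged into one kernel-verified Lean document; each statement's English description precedes it below -/
import Mathlib

section
/- The inversion in a topologically periodic Clifford topological semigroup S is continuous if and only if it is continuous at every idempotent of S. -/
open Filter Topology

variable {S : Type*}

/-- `spow x n` is `x ^ n` for `n ≥ 1` in a semigroup (with junk value `x` at `0`). -/
def spow {S : Type*} [Mul S] (x : S) : ℕ → S
  | 0 => x
  | 1 => x
  | n + 2 => spow x (n + 1) * x

/-- An element of a topological semigroup is topologically periodic if every open
neighbourhood of `x` contains `x ^ n` for some `n ≥ 2`. -/
def TopPeriodic {S : Type*} [Mul S] [TopologicalSpace S] (x : S) : Prop :=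
  ∀ U : Set S, IsOpen U → x ∈ U → ∃ n : ℕ, 2 ≤ n ∧ spow x n ∈ U

/-- The Clifford part `H(S)` of a semigroup: the union of all maximal subgroups. -/
def HSet (S : Type*) [Mul S] : Set S :=
  {x | ∃ y, x * y = y * x ∧ x * y * x = x ∧ y * x * y = y}

/-- The maximal subgroup `H(e)` of a semigroup with identity the idempotent `e`. -/
def Hgrp (S : Type*) [Mul S] (e : S) : Set S :=
  {x | ∃ y, x * y = e ∧ y * x = e ∧ x * e = x ∧ e * x = x ∧ y * e = y ∧ e * y = y}

/-- `inv` is the inversion map on the Clifford part `H(S)`: it sends each element of a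
maximal subgroup to its (unique) commuting inverse. -/
def IsInvMap (S : Type*) [Mul S] (inv : S → S) : Prop :=
  ∀ x ∈ HSet S, x * inv x = inv x * x ∧ x * inv x * x = x ∧ inv x * x * inv x = inv x

/-- A topological space is countably compact if every countable open cover admits a
finite subcover. -/
def CountablyCompactSpace' (X : Type*) [TopologicalSpace X] : Prop :=
  ∀ U : ℕ → Set X, (∀ n, IsOpen (U n)) → (⋃ n, U n) = Set.univ →
    ∃ F : Finset ℕ, (⋃ n ∈ F, U n) = Set.univ

/-- A subset of a topological space is countably compact (as a subspace) if every
countable cover by open sets of the ambient space admits a finite subcover. -/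
def CountablyCompactIn {X : Type*} [TopologicalSpace X] (A : Set X) : Prop :=
  ∀ U : ℕ → Set X, (∀ n, IsOpen (U n)) → A ⊆ ⋃ n, U n →
    ∃ F : Finset ℕ, A ⊆ ⋃ n ∈ F, U n

/-- A topological space is pseudocompact if every continuous real-valued function on it
is bounded. -/
def Pseudocompact (X : Type*) [TopologicalSpace X] : Prop :=
  ∀ f : X → ℝ, Continuous f → ∃ M : ℝ, ∀ x, |f x| ≤ M

section AuxLemmas

theorem spow_succ [Mul S] (x : S) : ∀ {n : ℕ}, 1 ≤ n → spow x (n + 1) = spow x n * x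
  | n + 1, _ => rfl

theorem spow_succ' [Semigroup S] (x : S) : ∀ {n : ℕ}, 1 ≤ n → spow x (n + 1) = x * spow x n
  | 1, _ => rfl
  | n + 2, _ => by
    have ih := spow_succ' x (n := n + 1) (by omega)
    calc spow x (n + 3) = spow x (n + 2) * x := rfl
      _ = (x * spow x (n + 1)) * x := by rw [ih]
      _ = x * (spow x (n + 1) * x) := mul_assoc _ _ _
      _ = x * spow x (n + 2) := rfl

theorem spow_add [Semigroup S] (x : S) {a b : ℕ} (ha : 1 ≤ a) (hb : 1 ≤ b) :
    spow x a * spow x b = spow x (a + b) := by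
  induction b, hb using Nat.le_induction with
  | base => rw [show spow x 1 = x from rfl, ← spow_succ x ha]
  | succ n hn ih =>
    rw [spow_succ x hn, ← mul_assoc, ih, ← spow_succ x (by omega)]
    rfl

theorem spow_mul [Semigroup S] (x : S) {a b : ℕ} (ha : 1 ≤ a) (hb : 1 ≤ b) :
    spow (spow x a) b = spow x (a * b) := by
  induction b, hb using Nat.le_induction with
  | base => rw [show spow (spow x a) 1 = spow x a from rfl, Nat.mul_one]
  | succ n hn ih =>
    rw [spow_succ (spow x a) hn, ih, spow_add x (Nat.mul_pos ha hn) ha, Nat.mul_succ]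

theorem continuous_spow {S : Type*} [Semigroup S] [TopologicalSpace S] [ContinuousMul S]
    (n : ℕ) : Continuous (fun x : S => spow x n) := by
  induction n using Nat.strong_induction_on with
  | _ n ih =>
    match n with
    | 0 => exact continuous_id
    | 1 => exact continuous_id
    | m + 2 => exact (ih (m + 1) (by omega)).mul continuous_id

theorem cinv_unique [Semigroup S] {a b c : S}
    (hb1 : a * b = b * a) (hb2 : a * b * a = a) (hb3 : b * a * b = b)
    (hc1 : a * c = c * a) (hc2 : a * c * a = a) (hc3 : c * a * c = c) :
    b = c := by
  have h1 : (a * b) * (a * c) = a * c := by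
    rw [← mul_assoc, hb2]
  have hb' : b = (b * a) * c * (a * b) := by
    calc b = b * a * b := hb3.symm
      _ = b * (a * c * a) * b := by rw [hc2]
      _ = (b * a) * c * (a * b) := by simp only [mul_assoc]
  have key : b * a = a * c := by
    calc b * a = ((b * a) * c * (a * b)) * a := by rw [← hb']
      _ = (b * a) * (c * (a * b * a)) := by simp only [mul_assoc]
      _ = (b * a) * (c * a) := by rw [hb2]
      _ = (b * a) * (a * c) := by rw [hc1]
      _ = (a * b) * (a * c) := by rw [hb1]
      _ = a * c := h1
  have h4 : (a * c) * c = c := by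
    calc (a * c) * c = (c * a) * c := by rw [hc1]
      _ = c := hc3
  calc b = (b * a) * c * (a * b) := hb'
    _ = (b * a) * c * (b * a) := by rw [hb1]
    _ = (a * c) * c * (a * c) := by rw [key]
    _ = c * (a * c) := by rw [h4]
    _ = c := by rw [← mul_assoc]; exact hc3

theorem e_mul_spow [Semigroup S] {e z : S} (hez : e * z = z) {n : ℕ} (hn : 1 ≤ n) :
    e * spow z n = spow z n := by
  induction n, hn using Nat.le_induction with
  | base => exact hez
  | succ m hm ih => rw [spow_succ z hm, ← mul_assoc, ih]

theorem spow_mul_spow_inv [Semigroup S] {y y' : S}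
    (h1 : y * y' = y' * y) (h2 : y * y' * y = y) (h3 : y' * y * y' = y')
    {n : ℕ} (hn : 1 ≤ n) : spow y n * spow y' n = y * y' := by
  induction n, hn using Nat.le_induction with
  | base => rfl
  | succ m hm ih =>
    rw [spow_succ' y hm, spow_succ y' hm]
    calc (y * spow y m) * (spow y' m * y') = y * ((spow y m * spow y' m) * y') := by
          simp only [mul_assoc]
      _ = y * ((y * y') * y') := by rw [ih]
      _ = y * y' := by rw [h1, h3, h1]

theorem inv_spow [Semigroup S] (hC : ∀ x : S, x ∈ HSet S)
    (inv : S → S) (hinv : IsInvMap S inv) (y : S) {n : ℕ} (hn : 1 ≤ n) :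
    inv (spow y n) = spow (inv y) n := by
  obtain ⟨h1, h2, h3⟩ := hinv y (hC y)
  obtain ⟨g1, g2, g3⟩ := hinv (spow y n) (hC _)
  have A : spow y n * spow (inv y) n = y * inv y := spow_mul_spow_inv h1 h2 h3 hn
  have B : spow (inv y) n * spow y n = y * inv y := by
    rw [spow_mul_spow_inv h1.symm h3 h2 hn, ← h1]
  have hcomm : spow y n * spow (inv y) n = spow (inv y) n * spow y n := by rw [A, B]
  have hmid : spow y n * spow (inv y) n * spow y n = spow y n := by
    rw [A]; exact e_mul_spow h2 hn
  have hmid2 : spow (inv y) n * spow y n * spow (inv y) n = spow (inv y) n := by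
    rw [B]
    exact e_mul_spow (by rw [h1]; exact h3) hn
  exact cinv_unique g1 g2 g3 hcomm hmid hmid2

theorem key_identity [Semigroup S] (hC : ∀ x : S, x ∈ HSet S)
    (inv : S → S) (hinv : IsInvMap S inv) (y : S) {k : ℕ} (hk : 2 ≤ k) :
    inv y = spow y (k - 1) * inv (spow y k) := by
  obtain ⟨h1, h2, h3⟩ := hinv y (hC y)
  rw [inv_spow hC inv hinv y (by omega : 1 ≤ k)]
  obtain ⟨m, rfl⟩ : ∃ m, k = m + 1 := ⟨k - 1, by omega⟩
  have hm : 1 ≤ m := by omega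
  simp only [Nat.add_sub_cancel]
  rw [spow_succ (inv y) hm, ← mul_assoc, spow_mul_spow_inv h1 h2 h3 hm, h1]
  exact h3.symm

theorem inv_mul_spow [Semigroup S] {x x' : S}
    (h1 : x * x' = x' * x) (h2 : x * x' * x = x) {k : ℕ} (hk : 2 ≤ k) :
    x' * spow x k = spow x (k - 1) := by
  obtain ⟨j, rfl⟩ : ∃ j, k = j + 1 := ⟨k - 1, by omega⟩
  have hj : 1 ≤ j := by omega
  simp only [Nat.add_sub_cancel]
  rw [spow_succ' x hj, ← mul_assoc, ← h1]
  exact e_mul_spow h2 hj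

theorem pow_near_idem [Semigroup S] [TopologicalSpace S] [ContinuousMul S]
    (hper : ∀ x : S, TopPeriodic x) (x x' : S)
    (h1 : x * x' = x' * x) (h2 : x * x' * x = x)
    (E : Set S) (hE : IsOpen E) (heE : x * x' ∈ E) :
    ∃ k, 2 ≤ k ∧ spow x k ∈ E := by
  have hU : IsOpen {z | x' * z ∈ E} := hE.preimage (continuous_const.mul continuous_id)
  have hxU : x ∈ {z | x' * z ∈ E} := by
    show x' * x ∈ E; rw [← h1]; exact heE
  obtain ⟨m, hm, hmU⟩ := hper x _ hU hxU
  have hxm : spow x (m - 1) ∈ E := by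
    rw [← inv_mul_spow h1 h2 hm]; exact hmU
  obtain ⟨p, hp, hpE⟩ := hper (spow x (m - 1)) E hE hxm
  refine ⟨(m - 1) * p, le_trans hp (Nat.le_mul_of_pos_left p (by omega)), ?_⟩
  rw [← spow_mul x (by omega : 1 ≤ m - 1) (by omega : 1 ≤ p)]
  exact hpE

theorem inv_idem [Semigroup S] (hC : ∀ x : S, x ∈ HSet S)
    (inv : S → S) (hinv : IsInvMap S inv) (e : S) (he : e * e = e) : inv e = e := by
  obtain ⟨g1, g2, g3⟩ := hinv e (hC e)
  exact cinv_unique g1 g2 g3 rfl (by rw [he, he]) (by rw [he, he])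

end AuxLemmas


theorem stmt6 [Semigroup S] [TopologicalSpace S] [ContinuousMul S]
    (hClifford : ∀ x : S, x ∈ HSet S) (hper : ∀ x : S, TopPeriodic x)
    (inv : S → S) (hinv : IsInvMap S inv) :
    Continuous inv ↔ ∀ e : S, e * e = e → ContinuousAt inv e := by
  constructor
  · intro h e _
    exact h.continuousAt
  · intro hidem
    rw [continuous_iff_continuousAt]
    intro x
    obtain ⟨h1, h2, h3⟩ := hinv x (hClifford x)
    have hee : (x * inv x) * (x * inv x) = x * inv x := by
      rw [← mul_assoc, h2]
    have hx'e : inv x * (x * inv x) = inv x := by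
      rw [← mul_assoc]; exact h3
    rw [ContinuousAt, tendsto_nhds]
    intro W hWopen hxW
    have hmulo : IsOpen ((fun p : S × S => p.1 * p.2) ⁻¹' W) := hWopen.preimage continuous_mul
    have hmem : (inv x, x * inv x) ∈ (fun p : S × S => p.1 * p.2) ⁻¹' W := by
      show inv x * (x * inv x) ∈ W; rw [hx'e]; exact hxW
    obtain ⟨W₁, W₂, hW₁o, hW₂o, hx'W₁, heW₂, hsub⟩ :=
      isOpen_prod_iff.mp hmulo (inv x) (x * inv x) hmem
    have hcinv : ContinuousAt inv (x * inv x) := hidem _ hee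
    have hinve : inv (x * inv x) = x * inv x := inv_idem hClifford inv hinv _ hee
    have hWnhds : inv ⁻¹' W₂ ∈ 𝓝 (x * inv x) :=
      hcinv (hW₂o.mem_nhds (by rw [hinve]; exact heW₂))
    obtain ⟨E₀, hE₀sub, hE₀o, heE₀⟩ := mem_nhds_iff.mp hWnhds
    have hE'o : IsOpen (E₀ ∩ {z | inv x * z ∈ W₁}) :=
      hE₀o.inter (hW₁o.preimage (continuous_const.mul continuous_id))
    have heE' : x * inv x ∈ E₀ ∩ {z | inv x * z ∈ W₁} :=
      ⟨heE₀, by show inv x * (x * inv x) ∈ W₁; rw [hx'e]; exact hx'W₁⟩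
    obtain ⟨k, hk, hkE'⟩ := pow_near_idem hper x (inv x) h1 h2 _ hE'o heE'
    have hxk1 : spow x (k - 1) ∈ W₁ := by
      rw [← inv_mul_spow h1 h2 hk]; exact hkE'.2
    have hVo : IsOpen (((fun y => spow y (k - 1)) ⁻¹' W₁) ∩ ((fun y => spow y k) ⁻¹' E₀)) :=
      (hW₁o.preimage (continuous_spow _)).inter (hE₀o.preimage (continuous_spow _))
    have hxV : x ∈ ((fun y => spow y (k - 1)) ⁻¹' W₁) ∩ ((fun y => spow y k) ⁻¹' E₀) :=
      ⟨hxk1, hkE'.1⟩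
    refine mem_nhds_iff.mpr ⟨_, ?_, hVo, hxV⟩
    rintro y ⟨hy1, hy2⟩
    show inv y ∈ W
    rw [key_identity hClifford inv hinv y hk]
    exact hsub (Set.mk_mem_prod hy1 (hE₀sub hy2))
end

section
/- Let S be a regular (T₃) topological semigroup such that S × S is countably compact. Then the inversion map inv : H(S) → H(S) is continuous. -/
open Filter Topology

variable {S : Type*}

/-! ### Auxiliary material for the proof of `stmt7`

We prove: if `S` is a `T₃` topological semigroup whose square is countably compact,
then the inversion map is continuous on the Clifford part `H(S)`.

Strategy.  Suppose inversion is discontinuous at `x ∈ H(S)` with `y := inv x`,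
witnessed by an open `U ∋ y`; regularity gives an open `V ∋ y` with `closure V ⊆ U`.
Choosing "bad" points `z m` (with `inv (z m) ∉ U`) in a decreasing chain of
neighbourhoods of `x` that controls all powers `s ↦ s^k` (for those `k ≤ m` with
`x^k ∈ V`), countable compactness of `S × S` yields a cluster point `(p, q)` of the
sequence `((z m, inv (z m)))`.  Then `(p, q)` is a commuting-inverse pair, `q ∉ U`,
and `p^k ∈ closure V` whenever `x^k ∈ V`.

Clustering the sequence `((x^n, y^n))` (whose coordinatewise products are constantly
the idempotent `e = x * y`) shows that for every open `W ∋ e` there are arbitrarily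
large `n` with `x^n ∈ W` and `y^n ∈ W` simultaneously (`lemD` below; this uses that
differences of such exponents again work, via the group identities).  Clustering the
sequence `((p^{σ i}, q^{σ i}))` along these exponents then produces arbitrarily large
`j` with `p^j` arbitrarily close to `p * q` and simultaneously `x^j` arbitrarily close
to `e` (`lemM`).  Multiplying by `q` resp. `y` produces an exponent `k` with
`x^k ∈ V` but `p^k ∉ closure V`, contradicting the property of the cluster point. -/

section AuxForStmt7

/-- `pw a n = a^(n+1)` (powers with exponent at least one). -/
def pw {S : Type*} [Mul S] (a : S) : ℕ → S
  | 0 => a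
  | n + 1 => pw a n * a

lemma pw_succ {S : Type*} [Mul S] (a : S) (n : ℕ) : pw a (n + 1) = pw a n * a := rfl

lemma pw_comm {S : Type*} [Semigroup S] {a b : S} (h1 : a * b = b * a) :
    ∀ n, pw a n * b = b * pw a n
  | 0 => h1
  | n + 1 => by
    rw [pw_succ, mul_assoc, h1, ← mul_assoc, pw_comm h1 n, mul_assoc, ← pw_succ]

lemma pw_add {S : Type*} [Semigroup S] (a : S) (i : ℕ) :
    ∀ j, pw a (i + j + 1) = pw a i * pw a j
  | 0 => rfl
  | j + 1 => by
    rw [show i + (j + 1) + 1 = (i + j + 1) + 1 from rfl, pw_succ, pw_add a i j,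
      mul_assoc, ← pw_succ]

lemma La0 {S : Type*} [Semigroup S] {a b : S} (h1 : a * b = b * a) (h2 : a * b * a = a) :
    a * (a * b) = a := by
  rw [h1, ← mul_assoc, h2]

lemma L2 {S : Type*} [Semigroup S] {a b : S} (h1 : a * b = b * a) (h2 : a * b * a = a) :
    ∀ n, pw a n * (a * b) = pw a n
  | 0 => La0 h1 h2
  | n + 1 => by rw [pw_succ, mul_assoc, La0 h1 h2, ← pw_succ]

lemma L1 {S : Type*} [Semigroup S] {a b : S} (h1 : a * b = b * a) (h2 : a * b * a = a) :
    ∀ n, pw a n * pw b n = a * b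
  | 0 => rfl
  | n + 1 => by
    have hc : a * pw b n = pw b n * a := (pw_comm h1.symm n).symm
    calc pw a (n + 1) * pw b (n + 1) = (pw a n * a) * (pw b n * b) := rfl
      _ = pw a n * (a * (pw b n * b)) := mul_assoc _ _ _
      _ = pw a n * ((a * pw b n) * b) := by rw [← mul_assoc a]
      _ = pw a n * ((pw b n * a) * b) := by rw [hc]
      _ = pw a n * (pw b n * (a * b)) := by rw [mul_assoc]
      _ = (pw a n * pw b n) * (a * b) := (mul_assoc _ _ _).symm
      _ = (a * b) * (a * b) := by rw [L1 h1 h2 n]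
      _ = ((a * b) * a) * b := (mul_assoc _ a b).symm
      _ = a * b := by rw [h2]

lemma L3 {S : Type*} [Semigroup S] {a b : S} (h1 : a * b = b * a) (h2 : a * b * a = a)
    (n : ℕ) : b * pw a (n + 1) = pw a n := by
  rw [pw_succ, ← mul_assoc, ← pw_comm h1 n, mul_assoc, ← h1, L2 h1 h2 n]

lemma L4 {S : Type*} [Semigroup S] {a b : S} (h1 : a * b = b * a) (h2 : a * b * a = a)
    (n m : ℕ) (h : m + 1 ≤ n) : pw a n * pw b m = pw a (n - m - 1) := by
  obtain ⟨i, rfl⟩ : ∃ i, n = i + m + 1 := ⟨n - m - 1, by omega⟩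
  have hidx : i + m + 1 - m - 1 = i := by omega
  rw [hidx, pw_add a i m, mul_assoc, L1 h1 h2 m, L2 h1 h2 i]

lemma cont_pw {S : Type*} [Mul S] [TopologicalSpace S] [ContinuousMul S] :
    ∀ k, Continuous fun s : S => pw s k
  | 0 => continuous_id
  | k + 1 => (cont_pw k).mul continuous_id

/-- Every sequence in a countably compact space has a cluster point. -/
lemma exC {X : Type*} [TopologicalSpace X] (h : CountablyCompactSpace' X) (u : ℕ → X) :
    ∃ p : X, ∀ N : ℕ, p ∈ closure {w | ∃ n, N ≤ n ∧ u n = w} := by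
  by_contra hno
  push_neg at hno
  choose Nf hNf using hno
  obtain ⟨F, hF⟩ := h (fun N => (closure {w | ∃ n, N ≤ n ∧ u n = w})ᶜ)
    (fun N => isClosed_closure.isOpen_compl)
    (by
      ext p
      simp only [Set.mem_iUnion, Set.mem_compl_iff, Set.mem_univ, iff_true]
      exact ⟨Nf p, hNf p⟩)
  have hu : u (F.sup id) ∈ ⋃ N ∈ F, (closure {w | ∃ n, N ≤ n ∧ u n = w})ᶜ := by
    rw [hF]; trivial
  simp only [Set.mem_iUnion, exists_prop] at hu
  obtain ⟨N, hNF, hN⟩ := hu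
  exact hN (subset_closure ⟨F.sup id, Finset.le_sup (f := id) hNF, rfl⟩)

lemma touch {X : Type*} [TopologicalSpace X] {A O : Set X} {pt : X}
    (hp : pt ∈ closure A) (hO : IsOpen O) (hpO : pt ∈ O) : ∃ a ∈ A, a ∈ O := by
  obtain ⟨a, haO, haA⟩ := mem_closure_iff.mp hp O hO hpO
  exact ⟨a, haA, haO⟩

lemma box_mul {S : Type*} [Mul S] [TopologicalSpace S] [ContinuousMul S]
    {W : Set S} (hW : IsOpen W) {c d : S} (h : c * d ∈ W) :
    ∃ Nc Nd : Set S, IsOpen Nc ∧ IsOpen Nd ∧ c ∈ Nc ∧ d ∈ Nd ∧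
      ∀ s ∈ Nc, ∀ t ∈ Nd, s * t ∈ W := by
  have hpre : IsOpen ((fun z : S × S => z.1 * z.2) ⁻¹' W) :=
    hW.preimage continuous_mul
  rw [isOpen_prod_iff] at hpre
  obtain ⟨Nc, Nd, hNc, hNd, hc, hd, hsub⟩ := hpre c d h
  exact ⟨Nc, Nd, hNc, hNd, hc, hd, fun s hs t ht => hsub (Set.mk_mem_prod hs ht)⟩

end AuxForStmt7

theorem stmt7 [Semigroup S] [TopologicalSpace S] [ContinuousMul S] [T3Space S]
    (hcc : CountablyCompactSpace' (S × S))
    (inv : S → S) (hinv : IsInvMap S inv) :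
    ContinuousOn inv (HSet S) := by
  classical
  intro x hx
  by_contra hnc
  obtain ⟨hxy1, hxy2, hxy3⟩ := hinv x hx
  set y := inv x with hy
  -- extract the discontinuity data
  have hnc' : ¬ Filter.Tendsto inv (nhdsWithin x (HSet S)) (nhds y) := hnc
  rw [Filter.tendsto_def] at hnc'
  push_neg at hnc'
  obtain ⟨T, hT, hTn⟩ := hnc'
  obtain ⟨U, hUT, hUopen, hyU⟩ := mem_nhds_iff.mp hT
  have hUn : inv ⁻¹' U ∉ nhdsWithin x (HSet S) := fun hh =>
    hTn (Filter.mem_of_superset hh (Set.preimage_mono hUT))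
  have hbad : ∀ O : Set S, IsOpen O → x ∈ O → ∃ z, z ∈ O ∧ z ∈ HSet S ∧ inv z ∉ U := by
    intro O hO hxO
    by_contra hcon
    push_neg at hcon
    exact hUn (mem_nhdsWithin.mpr ⟨O, hO, hxO, fun z hz => hcon z hz.1 hz.2⟩)
  -- regularity: open V ∋ y with closure V ⊆ U
  obtain ⟨Cc, hCc, hCcl, hCsub⟩ := exists_mem_nhds_isClosed_subset (hUopen.mem_nhds hyU)
  set V := interior Cc with hV
  have hVopen : IsOpen V := isOpen_interior
  have hyV : y ∈ V := mem_interior_iff_mem_nhds.mpr hCc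
  have hclV : closure V ⊆ U := (closure_minimal interior_subset hCcl).trans hCsub
  -- the chain of neighbourhoods of x
  set Oif : ℕ → Set S := fun k =>
    if pw x k ∈ V then {s : S | pw s k ∈ V} else Set.univ with hOif
  have hOifo : ∀ k, IsOpen (Oif k) := by
    intro k
    simp only [hOif]
    split_ifs
    · exact hVopen.preimage (cont_pw k)
    · exact isOpen_univ
  have hxOif : ∀ k, x ∈ Oif k := by
    intro k
    simp only [hOif]
    split_ifs with hcase
    · exact hcase
    · trivial
  set OM : ℕ → Set S := fun m => ⋂ k ∈ Finset.range (m + 1), Oif k with hOM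
  have hOMo : ∀ m, IsOpen (OM m) := fun m =>
    isOpen_biInter_finset (fun k _ => hOifo k)
  have hxOM : ∀ m, x ∈ OM m := fun m => Set.mem_iInter₂.mpr (fun k _ => hxOif k)
  have hmemOM : ∀ {z : S} {m k : ℕ}, z ∈ OM m → k ≤ m → pw x k ∈ V → pw z k ∈ V := by
    intro z m k hz hkm hkG
    have hmem : z ∈ Oif k :=
      Set.mem_iInter₂.mp hz k (Finset.mem_range.mpr (by omega))
    simp only [hOif] at hmem
    rwa [if_pos hkG] at hmem
  -- the bad sequence
  choose zs hz1 hz2 hz3 using fun m => hbad (OM m) (hOMo m) (hxOM m)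
  -- the ghost cluster pair
  obtain ⟨pq, hpq⟩ := exC hcc (fun m => (zs m, inv (zs m)))
  obtain ⟨p, q⟩ := pq
  have hrel : p * q = q * p ∧ p * q * p = p ∧ q * p * q = q := by
    have hcl : IsClosed {ab : S × S |
        ab.1 * ab.2 = ab.2 * ab.1 ∧ ab.1 * ab.2 * ab.1 = ab.1 ∧ ab.2 * ab.1 * ab.2 = ab.2} := by
      refine IsClosed.inter (isClosed_eq (continuous_fst.mul continuous_snd)
          (continuous_snd.mul continuous_fst)) (IsClosed.inter ?_ ?_)
      · exact isClosed_eq ((continuous_fst.mul continuous_snd).mul continuous_fst)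
          continuous_fst
      · exact isClosed_eq ((continuous_snd.mul continuous_fst).mul continuous_snd)
          continuous_snd
    have hsub : {w | ∃ n, 0 ≤ n ∧ (fun m => (zs m, inv (zs m))) n = w} ⊆
        {ab : S × S | ab.1 * ab.2 = ab.2 * ab.1 ∧ ab.1 * ab.2 * ab.1 = ab.1 ∧
          ab.2 * ab.1 * ab.2 = ab.2} := by
      rintro w ⟨n, -, rfl⟩
      exact hinv (zs n) (hz2 n)
    have hmem := closure_mono hsub (hpq 0)
    rwa [hcl.closure_eq] at hmem
  obtain ⟨hr1, hr2, hr3⟩ := hrel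
  have hqU : q ∉ U := by
    have hcl : IsClosed {ab : S × S | ab.2 ∈ Uᶜ} :=
      (hUopen.isClosed_compl).preimage continuous_snd
    have hsub : {w | ∃ n, 0 ≤ n ∧ (fun m => (zs m, inv (zs m))) n = w} ⊆
        {ab : S × S | ab.2 ∈ Uᶜ} := by
      rintro w ⟨n, -, rfl⟩
      exact hz3 n
    have hmem := closure_mono hsub (hpq 0)
    rw [hcl.closure_eq] at hmem
    exact hmem
  have hF3 : ∀ k, pw x k ∈ V → pw p k ∈ closure V := by
    intro k hk
    have hcl : IsClosed {ab : S × S | pw ab.1 k ∈ closure V} :=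
      isClosed_closure.preimage ((cont_pw k).comp continuous_fst)
    have hsub : {w | ∃ n, k ≤ n ∧ (fun m => (zs m, inv (zs m))) n = w} ⊆
        {ab : S × S | pw ab.1 k ∈ closure V} := by
      rintro w ⟨n, hn, rfl⟩
      exact subset_closure (hmemOM (hz1 n) hn hk)
    have hmem := closure_mono hsub (hpq k)
    rw [hcl.closure_eq] at hmem
    exact hmem
  -- Lemma D: joint returns of powers of x and y to any neighbourhood of e = x*y
  have lemD : ∀ W : Set S, IsOpen W → x * y ∈ W →
      ∀ m : ℕ, ∃ n, m ≤ n ∧ pw x n ∈ W ∧ pw y n ∈ W := by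
    obtain ⟨cd, hcd⟩ := exC hcc (fun n => (pw x n, pw y n))
    obtain ⟨c, d⟩ := cd
    have hK : c * d = x * y ∧ d * c = x * y := by
      have hcl : IsClosed {ab : S × S | ab.1 * ab.2 = x * y ∧ ab.2 * ab.1 = x * y} :=
        (isClosed_eq (continuous_fst.mul continuous_snd) continuous_const).inter
          (isClosed_eq (continuous_snd.mul continuous_fst) continuous_const)
      have hsub : {w | ∃ n, 0 ≤ n ∧ (fun n => (pw x n, pw y n)) n = w} ⊆
          {ab : S × S | ab.1 * ab.2 = x * y ∧ ab.2 * ab.1 = x * y} := by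
        rintro w ⟨n, -, rfl⟩
        exact ⟨L1 hxy1 hxy2 n, (L1 hxy1.symm hxy3 n).trans hxy1.symm⟩
      have hmem := closure_mono hsub (hcd 0)
      rwa [hcl.closure_eq] at hmem
    intro W hW heW m
    obtain ⟨Nc, Nd, hNco, hNdo, hcN, hdN, hmulcd⟩ :=
      box_mul hW (show c * d ∈ W by rw [hK.1]; exact heW)
    obtain ⟨Nd', Nc', hNdo', hNco', hdN', hcN', hmuldc⟩ :=
      box_mul hW (show d * c ∈ W by rw [hK.2]; exact heW)
    have hboxo : IsOpen ((Nc ∩ Nc') ×ˢ (Nd ∩ Nd')) :=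
      (hNco.inter hNco').prod (hNdo.inter hNdo')
    have hboxm : (c, d) ∈ (Nc ∩ Nc') ×ˢ (Nd ∩ Nd') :=
      Set.mk_mem_prod ⟨hcN, hcN'⟩ ⟨hdN, hdN'⟩
    obtain ⟨w1, hw1A, hw1B⟩ := touch (hcd 0) hboxo hboxm
    obtain ⟨m', -, rfl⟩ := hw1A
    obtain ⟨w2, hw2A, hw2B⟩ := touch (hcd (m + m' + 1)) hboxo hboxm
    obtain ⟨n, hn, rfl⟩ := hw2A
    have hw1B' := Set.mem_prod.mp hw1B
    have hw2B' := Set.mem_prod.mp hw2B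
    refine ⟨n - m' - 1, by omega, ?_, ?_⟩
    · have hEq : pw x n * pw y m' = pw x (n - m' - 1) := L4 hxy1 hxy2 n m' (by omega)
      rw [← hEq]
      exact hmulcd _ hw2B'.1.1 _ hw1B'.2.1
    · have hEq : pw y n * pw x m' = pw y (n - m' - 1) := L4 hxy1.symm hxy3 n m' (by omega)
      rw [← hEq]
      exact hmuldc _ hw2B'.2.2 _ hw1B'.1.2
  -- e is idempotent
  have he2 : (x * y) * (x * y) = x * y := by
    rw [← mul_assoc, hxy2]
  -- Lemma M: mixed sync between powers of p and powers of x
  have lemM : ∀ E : Set S, IsOpen E → p * q ∈ E → ∀ Wo : Set S, IsOpen Wo → x * y ∈ Wo →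
      ∀ m : ℕ, ∃ j, m ≤ j ∧ pw p j ∈ E ∧ pw x j ∈ Wo := by
    intro E hE hpqE Wo hWo heWo
    obtain ⟨N1, N2, hN1, hN2, heN1, heN2, hmulW⟩ :=
      box_mul hWo (show (x * y) * (x * y) ∈ Wo by rw [he2]; exact heWo)
    have hW1o : IsOpen (N1 ∩ N2) := hN1.inter hN2
    have heW1 : x * y ∈ N1 ∩ N2 := ⟨heN1, heN2⟩
    have hmulW1 : ∀ s ∈ N1 ∩ N2, ∀ t ∈ N1 ∩ N2, s * t ∈ Wo := fun s hs t ht =>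
      hmulW s hs.1 t ht.2
    choose σ hσ1 hσ2 hσ3 using fun i => lemD (N1 ∩ N2) hW1o heW1 i
    obtain ⟨cd, hcd⟩ := exC hcc (fun i => (pw p (σ i), pw q (σ i)))
    obtain ⟨c, d⟩ := cd
    have hK : c * d = p * q := by
      have hcl : IsClosed {ab : S × S | ab.1 * ab.2 = p * q} :=
        isClosed_eq (continuous_fst.mul continuous_snd) continuous_const
      have hsub : {w | ∃ n, 0 ≤ n ∧ (fun i => (pw p (σ i), pw q (σ i))) n = w} ⊆
          {ab : S × S | ab.1 * ab.2 = p * q} := by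
        rintro w ⟨i, -, rfl⟩
        exact L1 hr1 hr2 (σ i)
      have hmem := closure_mono hsub (hcd 0)
      rwa [hcl.closure_eq] at hmem
    intro m
    obtain ⟨Nc, Nd, hNco, hNdo, hcN, hdN, hmulE⟩ :=
      box_mul hE (show c * d ∈ E by rw [hK]; exact hpqE)
    obtain ⟨w1, hw1A, hw1B⟩ := touch (hcd 0) (hNco.prod hNdo) (Set.mk_mem_prod hcN hdN)
    obtain ⟨i0, -, rfl⟩ := hw1A
    obtain ⟨w2, hw2A, hw2B⟩ := touch (hcd (m + σ i0 + 1)) (hNco.prod hNdo)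
      (Set.mk_mem_prod hcN hdN)
    obtain ⟨i1, hi1, rfl⟩ := hw2A
    have hσn : m + σ i0 + 1 ≤ σ i1 := le_trans (by omega : m + σ i0 + 1 ≤ i1) (hσ1 i1)
    have hw1B' := Set.mem_prod.mp hw1B
    have hw2B' := Set.mem_prod.mp hw2B
    refine ⟨σ i1 - σ i0 - 1, by omega, ?_, ?_⟩
    · have hEq : pw p (σ i1) * pw q (σ i0) = pw p (σ i1 - σ i0 - 1) :=
        L4 hr1 hr2 _ _ (by omega)
      rw [← hEq]
      exact hmulE _ hw2B'.1 _ hw1B'.2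
    · have hEq : pw x (σ i1) * pw y (σ i0) = pw x (σ i1 - σ i0 - 1) :=
        L4 hxy1 hxy2 _ _ (by omega)
      rw [← hEq]
      exact hmulW1 _ (hσ2 i1) _ (hσ3 i0)
  -- endgame
  have hqclV : q ∉ closure V := fun h => hqU (hclV h)
  have hEo : IsOpen ((fun t : S => q * t) ⁻¹' (closure V)ᶜ) :=
    (isClosed_closure.isOpen_compl).preimage (continuous_const.mul continuous_id)
  have hpqE : p * q ∈ (fun t : S => q * t) ⁻¹' (closure V)ᶜ := by
    show q * (p * q) ∈ (closure V)ᶜ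
    rw [← mul_assoc, hr3]
    exact hqclV
  have hWoo : IsOpen ((fun t : S => y * t) ⁻¹' V) :=
    hVopen.preimage (continuous_const.mul continuous_id)
  have heWo : x * y ∈ (fun t : S => y * t) ⁻¹' V := by
    show y * (x * y) ∈ V
    rw [← mul_assoc, hxy3]
    exact hyV
  obtain ⟨j, hj1, hjE, hjW⟩ := lemM _ hEo hpqE _ hWoo heWo 1
  obtain ⟨k, rfl⟩ : ∃ k, j = k + 1 := ⟨j - 1, by omega⟩
  have hxkV : pw x k ∈ V := by
    have hEq : y * pw x (k + 1) = pw x k := L3 hxy1 hxy2 k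
    rw [← hEq]
    exact hjW
  have hpknot : pw p k ∉ closure V := by
    have hEq : q * pw p (k + 1) = pw p k := L3 hr1 hr2 k
    rw [← hEq]
    exact hjE
  exact hpknot (hF3 k hxkV)
end

section
/- Let S be a Hausdorff countably compact topological semigroup. Then each maximal subgroup H(e), e ∈ E(S), is sequentially closed in S: no sequence of elements of H(e) converges to a point outside H(e). -/
open Filter Topology

variable {S : Type*}

/-
`H(e)` is the projection to the first factor of the set of pairs `(x, y)` witnessing that `y` is
the inverse of `x` in `H(e)`; in a Hausdorff topological semigroup these pairs form a closed
subset of `S × S`. Projecting a closed subset of `X × Y` along a countably compact factor `Y`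
gives a sequentially closed set: if `u n → x` with `(u n, v n)` in the closed set, then a cluster
point `y` of `(v n)` makes `(x, y)` a cluster point of `(u n, v n)`, hence a point of the set.
-/

theorem CountablyCompactSpace'.countablyCompactSpace {X : Type*} [TopologicalSpace X]
    (h : CountablyCompactSpace' X) : CountablyCompactSpace X where
  isCountablyCompact_univ := isCountablyCompact_iff_countable_open_cover.2 fun U hU hcover ↦
    let ⟨t, ht⟩ := h U hU (Set.univ_subset_iff.1 hcover)
    ⟨t, ht.ge⟩

theorem Filter.Tendsto.mapClusterPt_prodMk {ι X Y : Type*} [TopologicalSpace X]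
    [TopologicalSpace Y] {l : Filter ι} {u : ι → X} {v : ι → Y} {x : X} {y : Y}
    (hu : Tendsto u l (𝓝 x)) (hv : MapClusterPt y l v) :
    MapClusterPt (x, y) l fun i ↦ (u i, v i) := by
  obtain ⟨U, hUl, hvU⟩ := mapClusterPt_iff_ultrafilter.1 hv
  exact mapClusterPt_iff_ultrafilter.2 ⟨U, hUl, (hu.mono_left hUl).prodMk_nhds hvU⟩

theorem IsClosed.isSeqClosed_image_fst {X Y : Type*} [TopologicalSpace X] [TopologicalSpace Y]
    [CountablyCompactSpace Y] {C : Set (X × Y)} (hC : IsClosed C) :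
    IsSeqClosed (Prod.fst '' C) := by
  intro u x hu hux
  choose w hwC hwu using hu
  obtain ⟨y, -, hy⟩ := CountablyCompactSpace.isCountablyCompact_univ.seq_clusterPt
    (fun n ↦ (w n).2) (Eventually.of_forall fun _ ↦ Set.mem_univ _)
  have hxy : MapClusterPt (x, y) atTop w := by
    simpa only [← hwu] using hux.mapClusterPt_prodMk hy
  exact ⟨(x, y), hC.mem_of_mapClusterPt hxy (Eventually.of_forall hwC), rfl⟩

def hgrpPairs (S : Type*) [Mul S] (e : S) : Set (S × S) :=
  {p | p.1 * p.2 = e ∧ p.2 * p.1 = e ∧ p.1 * e = p.1 ∧ e * p.1 = p.1 ∧ p.2 * e = p.2 ∧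
    e * p.2 = p.2}

theorem Hgrp_eq_image_fst_hgrpPairs [Mul S] (e : S) : Hgrp S e = Prod.fst '' hgrpPairs S e := by
  ext x
  simp [Hgrp, hgrpPairs]

theorem isClosed_hgrpPairs [Mul S] [TopologicalSpace S] [ContinuousMul S] [T2Space S] (e : S) :
    IsClosed (hgrpPairs S e) := by
  simp only [hgrpPairs, Set.ofPred_and]
  apply_rules [IsClosed.inter, isClosed_eq] <;> fun_prop

theorem stmt10_general [Semigroup S] [TopologicalSpace S] [ContinuousMul S] [T2Space S]
    (hcc : CountablyCompactSpace' S) (e : S) :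
    IsSeqClosed (Hgrp S e) := by
  have := hcc.countablyCompactSpace
  rw [Hgrp_eq_image_fst_hgrpPairs]
  exact (isClosed_hgrpPairs e).isSeqClosed_image_fst

theorem stmt10 [Semigroup S] [TopologicalSpace S] [ContinuousMul S] [T2Space S]
    (hcc : CountablyCompactSpace' S) (e : S) (he : e * e = e) :
    IsSeqClosed (Hgrp S e) :=
  stmt10_general hcc e
end
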